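/- arXiv:math-ph/0005032 — 2 statements merged into one kernel-verified Lean document; each statement's English description precedes it below -/
import Mathlib

section
/- If A : ℝ → GL(n,ℂ) is a continuous one-parameter group, i.e., A(0) = I and A(t+s) = A(t)A(s) for all real t,s, then there exists a unique n×n complex matrix X such that A(t) = e^{tX} for all t ∈ ℝ. -/
open NormedSpace Topology

/-!
A continuous one-parameter group `A` is smoothed by averaging: for small `ε ≠ 0` the integral
`∫₀^ε A` is close to `ε • A 0 = ε • 1`, hence invertible, and the group law gives
`A t * ∫₀^ε A = ∫ₜ^{t+ε} A`. Thus `A t = (∫ₜ^{t+ε} A) * (∫₀^ε A)⁻¹` is differentiable and solves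
`A' = A * X` with `X = (A ε - 1) * (∫₀^ε A)⁻¹`, so `A t * exp (t • -X)` is constant and
`A t = exp (t • X)`. The generator is unique since it is the derivative of `exp (t • X)` at `0`.
-/

section OneParameterGroup

variable {𝔸 : Type*} [NormedRing 𝔸] [NormedAlgebra ℝ 𝔸] [CompleteSpace 𝔸]

theorem exists_ne_zero_isUnit_intervalIntegral {f : ℝ → 𝔸} (hf : Continuous f)
    (h0 : IsUnit (f 0)) : ∃ ε ≠ 0, IsUnit (∫ s in 0..ε, f s) := by
  set F : ℝ → 𝔸 := fun t => ∫ s in 0..t, f s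
  have hF : HasDerivAt F (f 0) 0 := intervalIntegral.integral_hasDerivAt_right
    (hf.intervalIntegrable 0 0) (hf.stronglyMeasurableAtFilter _ _) hf.continuousAt
  have hslope : ∀ᶠ ε in 𝓝[≠] 0, IsUnit (slope F 0 ε) ∧ ε ≠ 0 :=
    ((hasDerivAt_iff_tendsto_slope.1 hF).eventually (Units.isOpen.mem_nhds h0)).and
      self_mem_nhdsWithin
  obtain ⟨ε, hunit, hε⟩ := hslope.exists
  have hF_eq : F ε = ε • slope F 0 ε := by
    simp [F, slope_def_module, smul_inv_smul₀ hε]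
  refine ⟨ε, hε, ?_⟩
  change IsUnit (F ε)
  rw [hF_eq, Algebra.smul_def]
  exact (hε.isUnit.map (algebraMap ℝ 𝔸)).mul hunit

theorem mul_intervalIntegral_eq_intervalIntegral_add {A : ℝ → 𝔸} {ε : ℝ}
    (hA : IntervalIntegrable A MeasureTheory.volume 0 ε) (hadd : ∀ t s, A (t + s) = A t * A s)
    (t : ℝ) : A t * ∫ s in 0..ε, A s = ∫ s in t..t + ε, A s :=
  calc A t * ∫ s in 0..ε, A s = ∫ s in 0..ε, A t * A s :=
        ((ContinuousLinearMap.mul ℝ 𝔸 (A t)).intervalIntegral_comp_comm hA).symm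
    _ = ∫ s in 0..ε, A (t + s) := by simp only [hadd]
    _ = ∫ s in t..t + ε, A s := by
      rw [intervalIntegral.integral_comp_add_left A t, add_zero]

theorem exists_forall_hasDerivAt_mul {A : ℝ → 𝔸} (hA : Continuous A) (h0 : A 0 = 1)
    (hadd : ∀ t s, A (t + s) = A t * A s) : ∃ X, ∀ t, HasDerivAt A (A t * X) t := by
  obtain ⟨ε, -, ⟨u, hu⟩⟩ := exists_ne_zero_isUnit_intervalIntegral hA (h0 ▸ isUnit_one)
  set F : ℝ → 𝔸 := fun t => ∫ s in 0..t, A s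
  have hF : ∀ t, HasDerivAt F (A t) t := fun t => intervalIntegral.integral_hasDerivAt_right
    (hA.intervalIntegrable 0 t) (hA.stronglyMeasurableAtFilter _ _) hA.continuousAt
  have hA_eq : (fun t => (F (t + ε) - F t) * ↑u⁻¹) = A := funext fun t => by
    rw [intervalIntegral.integral_interval_sub_left (hA.intervalIntegrable _ _)
      (hA.intervalIntegrable _ _), ← mul_intervalIntegral_eq_intervalIntegral_add
      (hA.intervalIntegrable _ _) hadd, ← hu, Units.mul_inv_cancel_right]
  refine ⟨(A ε - 1) * ↑u⁻¹, fun t => ?_⟩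
  have hderiv : HasDerivAt (fun t => (F (t + ε) - F t) * ↑u⁻¹) ((A (t + ε) - A t) * ↑u⁻¹) t :=
    (((hF (t + ε)).comp_add_const t ε).sub (hF t)).mul_const _
  rw [hA_eq, hadd] at hderiv
  convert hderiv using 1
  rw [← mul_assoc, mul_sub, mul_one]

theorem eq_exp_smul_of_hasDerivAt_mul {A : ℝ → 𝔸} {X : 𝔸}
    (hA : ∀ t, HasDerivAt A (A t * X) t) (h0 : A 0 = 1) (t : ℝ) : A t = exp (t • X) := by
  let +nondep : NormedAlgebra ℚ 𝔸 := .restrictScalars ℚ ℝ 𝔸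
  have hderiv : ∀ s : ℝ, HasDerivAt (fun s => A s * exp (s • -X)) 0 s := fun s => by
    convert (hA s).fun_mul (hasDerivAt_exp_smul_const' (-X) s) using 1
    rw [neg_mul, mul_neg, ← mul_assoc, add_neg_cancel]
  have hconst : A t * exp (t • -X) = 1 := by
    simpa [h0] using is_const_of_deriv_eq_zero (fun s => (hderiv s).differentiableAt)
      (fun s => (hderiv s).deriv) t 0
  have hcomm : Commute (t • -X) (t • X) := ((Commute.refl X).neg_left.smul_left t).smul_right t
  calc A t = A t * exp (t • -X) * exp (t • X) := by
        rw [mul_assoc, ← exp_add_of_commute hcomm, smul_neg, neg_add_cancel, exp_zero, mul_one]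
    _ = exp (t • X) := by rw [hconst, one_mul]

theorem eq_of_forall_exp_smul_eq {X Y : 𝔸} (h : ∀ t : ℝ, exp (t • X) = exp (t • Y)) : X = Y := by
  have hX := hasDerivAt_exp_smul_const X (0 : ℝ)
  rw [funext h] at hX
  simpa using hX.unique (hasDerivAt_exp_smul_const Y 0)

theorem existsUnique_forall_eq_exp_smul {A : ℝ → 𝔸} (hA : Continuous A) (h0 : A 0 = 1)
    (hadd : ∀ t s, A (t + s) = A t * A s) : ∃! X : 𝔸, ∀ t : ℝ, A t = exp (t • X) := by
  obtain ⟨X, hX⟩ := exists_forall_hasDerivAt_mul hA h0 hadd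
  refine ⟨X, eq_exp_smul_of_hasDerivAt_mul hX h0, fun Y hY => eq_of_forall_exp_smul_eq fun t => ?_⟩
  rw [← hY, eq_exp_smul_of_hasDerivAt_mul hX h0]

end OneParameterGroup

theorem one_parameter_subgroup_general (n : ℕ) (A : ℝ → Matrix (Fin n) (Fin n) ℂ)
    (hcont : Continuous A) (h0 : A 0 = 1)
    (hadd : ∀ t s : ℝ, A (t + s) = A t * A s) :
    ∃! X : Matrix (Fin n) (Fin n) ℂ, ∀ t : ℝ, A t = exp ((t : ℂ) • X) := by
  simp only [Complex.coe_smul]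
  -- any Banach algebra norm will do: neither `exp` nor the topology depends on the choice
  open scoped Matrix.Norms.L2Operator in
  exact existsUnique_forall_eq_exp_smul hcont h0 hadd

/-- **One-parameter subgroups**: if `A : ℝ → Matrix n n ℂ` is continuous, takes
values in the invertible matrices, with `A 0 = I` and `A (t+s) = A t * A s`,
then there is a unique matrix `X` with `A t = e^{tX}` for all `t`. -/
theorem one_parameter_subgroup (n : ℕ) (A : ℝ → Matrix (Fin n) (Fin n) ℂ)
    (hcont : Continuous A) (hunit : ∀ t, IsUnit (A t)) (h0 : A 0 = 1)
    (hadd : ∀ t s : ℝ, A (t + s) = A t * A s) :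
    ∃! X : Matrix (Fin n) (Fin n) ℂ, ∀ t : ℝ, A t = exp ((t : ℂ) • X) :=
  one_parameter_subgroup_general n A hcont h0 hadd
end

section
/- Let X be an n×n complex matrix and (C_m) a sequence of n×n complex matrices with ‖C_m‖ ≤ K/m² for some constant K. Then lim_{m→∞} (I + X/m + C_m)^m = e^X. -/
/-!
Put `y = m⁻¹ • x`, so that `exp x = (exp y) ^ m`. With `L = ‖x‖ + K`, both `1 + y + C m` and
`exp y` have norm at most `exp (L / m)`, and they differ by `O(1 / m²)` because
`exp y - 1 - y = O(‖y‖²)`. The telescoping bound `‖a ^ m - b ^ m‖ ≤ m M ^ (m - 1) ‖a - b‖` turns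
this into `‖(1 + y + C m) ^ m - exp x‖ = O(1 / m)`.
-/

open NormedSpace

attribute [local instance]
  Matrix.linftyOpNormedAddCommGroup Matrix.linftyOpNormedRing
  Matrix.linftyOpNormedSpace Matrix.linftyOpNormedAlgebra

open Filter Topology Finset
open scoped Nat

theorem norm_pow_sub_pow_le {A : Type*} [NormedRing A] [NormOneClass A] {a b : A} {M : ℝ}
    (ha : ‖a‖ ≤ M) (hb : ‖b‖ ≤ M) (k : ℕ) :
    ‖a ^ k - b ^ k‖ ≤ k * M ^ (k - 1) * ‖a - b‖ := by
  induction k with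
  | zero => simp
  | succ k ih =>
    have hM : 0 ≤ M := (norm_nonneg a).trans ha
    have hbk : ‖b ^ k‖ ≤ M ^ k := (norm_pow_le b k).trans (pow_le_pow_left₀ (norm_nonneg b) hb k)
    calc ‖a ^ (k + 1) - b ^ (k + 1)‖ = ‖a * (a ^ k - b ^ k) + (a - b) * b ^ k‖ := by
          rw [pow_succ' a, pow_succ' b]; congr 1; noncomm_ring
      _ ≤ M * (k * M ^ (k - 1) * ‖a - b‖) + ‖a - b‖ * M ^ k := by
          refine (norm_add_le _ _).trans (add_le_add ?_ ?_)
          · exact (norm_mul_le _ _).trans (mul_le_mul ha ih (norm_nonneg _) hM)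
          · exact (norm_mul_le _ _).trans (mul_le_mul_of_nonneg_left hbk (norm_nonneg _))
      _ = (k + 1 : ℕ) * M ^ (k + 1 - 1) * ‖a - b‖ := by
          rcases k with _ | k
          · simp
          · simp only [Nat.add_sub_cancel, pow_succ]; push_cast; ring

theorem tendsto_pow_sub_pow_of_norm_le {A : Type*} [NormedRing A] [NormOneClass A]
    {a b : ℕ → A} {L c : ℝ}
    (ha : ∀ᶠ m in atTop, ‖a m‖ ≤ Real.exp (L / m)) (hb : ∀ᶠ m in atTop, ‖b m‖ ≤ Real.exp (L / m))
    (hab : ∀ᶠ m in atTop, ‖a m - b m‖ ≤ c / m ^ 2) :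
    Tendsto (fun m => a m ^ m - b m ^ m) atTop (𝓝 0) := by
  refine squeeze_zero_norm' ?_ (tendsto_const_div_atTop_nhds_zero_nat (Real.exp |L| * c))
  filter_upwards [ha, hb, hab, eventually_ne_atTop 0] with m ham hbm habm hm
  have hm₀ : (0 : ℝ) < m := by positivity
  set M := Real.exp (|L| / m)
  have hM : 1 ≤ M := Real.one_le_exp (by positivity)
  have hLM : Real.exp (L / m) ≤ M := Real.exp_le_exp.2 (by gcongr; exact le_abs_self L)
  calc ‖a m ^ m - b m ^ m‖ ≤ m * M ^ (m - 1) * ‖a m - b m‖ :=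
        norm_pow_sub_pow_le (ham.trans hLM) (hbm.trans hLM) m
    _ ≤ m * M ^ m * (c / m ^ 2) := by
        gcongr
        exact Nat.sub_le m 1
    _ = Real.exp |L| * c / m := by
        rw [← Real.exp_nat_mul, mul_div_cancel₀ _ hm₀.ne']; field_simp

section BanachAlgebra

variable {A : Type*} [NormedRing A] [NormedAlgebra ℚ A] [CompleteSpace A]

theorem exp_inv_natCast_smul_pow (x : A) {m : ℕ} (hm : m ≠ 0) :
    exp ((m : ℚ)⁻¹ • x) ^ m = exp x := by
  rw [← exp_nsmul, ← Nat.cast_smul_eq_nsmul ℚ, smul_smul,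
    mul_inv_cancel₀ (Nat.cast_ne_zero.2 hm), one_smul]

variable [NormOneClass A]

theorem norm_exp_sub_sum_le (x : A) (N : ℕ) :
    ‖exp x - ∑ k ∈ range N, (k ! : ℚ)⁻¹ • x ^ k‖ ≤ ‖x‖ ^ N * Real.exp ‖x‖ := by
  have htail := (hasSum_nat_add_iff' N).2 (exp_series_hasSum_exp' (𝕂 := ℚ) x)
  have hreal : HasSum (fun k => ‖x‖ ^ N * (‖x‖ ^ k / k !)) (‖x‖ ^ N * Real.exp ‖x‖) := by
    rw [Real.exp_eq_exp_ℝ]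
    exact (expSeries_div_hasSum_exp ‖x‖).mul_left _
  refine htail.norm_le_of_bounded hreal fun k => ?_
  calc ‖((k + N)! : ℚ)⁻¹ • x ^ (k + N)‖ ≤ ‖x‖ ^ (k + N) / (k + N)! := by
        rw [norm_smul, norm_inv, ← Rat.norm_cast_real, Rat.cast_natCast, Real.norm_natCast,
          div_eq_inv_mul]
        gcongr
        exact norm_pow_le x _
    _ ≤ ‖x‖ ^ (k + N) / k ! := by gcongr; exact Nat.le_add_right k N
    _ = ‖x‖ ^ N * (‖x‖ ^ k / k !) := by ring

theorem norm_exp_le (x : A) : ‖exp x‖ ≤ Real.exp ‖x‖ := by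
  simpa using norm_exp_sub_sum_le x 0

theorem norm_exp_sub_one_sub_le (x : A) : ‖exp x - 1 - x‖ ≤ ‖x‖ ^ 2 * Real.exp ‖x‖ := by
  simpa [sum_range_succ, sub_sub] using norm_exp_sub_sum_le x 2

theorem tendsto_one_add_inv_smul_add_pow_exp (x : A) {C : ℕ → A} {K : ℝ}
    (hC : ∀ᶠ m in atTop, ‖C m‖ ≤ K / m ^ 2) :
    Tendsto (fun m : ℕ => (1 + (m : ℚ)⁻¹ • x + C m) ^ m) atTop (𝓝 (exp x)) := by
  have hK : 0 ≤ K := by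
    obtain ⟨m, hCm, hm⟩ := (hC.and (eventually_ge_atTop 1)).exists
    have hm₀ : (0 : ℝ) < m := by exact_mod_cast hm
    simpa using (le_div_iff₀ (by positivity)).1 ((norm_nonneg _).trans hCm)
  have hnorm (m : ℕ) : ‖(m : ℚ)⁻¹ • x‖ = ‖x‖ / m := by
    rw [norm_smul, norm_inv, ← Rat.norm_cast_real, Rat.cast_natCast, Real.norm_natCast,
      inv_mul_eq_div]
  rw [← tendsto_sub_nhds_zero_iff]
  refine (tendsto_pow_sub_pow_of_norm_le (L := ‖x‖ + K) (c := K + ‖x‖ ^ 2 * Real.exp ‖x‖)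
    (a := fun m => 1 + (m : ℚ)⁻¹ • x + C m) (b := fun m => exp ((m : ℚ)⁻¹ • x))
    ?_ ?_ ?_).congr' ?_
  · filter_upwards [hC, eventually_ge_atTop 1] with m hCm hm
    have hm₁ : (1 : ℝ) ≤ m := by exact_mod_cast hm
    calc ‖1 + (m : ℚ)⁻¹ • x + C m‖ ≤ 1 + ‖x‖ / m + K / m := by
          grw [norm_add₃_le, norm_one, hnorm, hCm]
          gcongr
          exact le_self_pow₀ hm₁ two_ne_zero
      _ = (‖x‖ + K) / m + 1 := by ring
      _ ≤ Real.exp ((‖x‖ + K) / m) := Real.add_one_le_exp _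
  · refine Eventually.of_forall fun m => (norm_exp_le _).trans ?_
    rw [hnorm]
    gcongr
    linarith
  · filter_upwards [hC, eventually_ge_atTop 1] with m hCm hm
    have hm₁ : (1 : ℝ) ≤ m := by exact_mod_cast hm
    set y := (m : ℚ)⁻¹ • x
    calc ‖1 + y + C m - exp y‖ = ‖C m - (exp y - 1 - y)‖ := by congr 1; abel
      _ ≤ K / m ^ 2 + (‖x‖ / m) ^ 2 * Real.exp ‖x‖ := by
          grw [norm_sub_le, hCm, norm_exp_sub_one_sub_le, hnorm]
          gcongr
          exact div_le_self (norm_nonneg x) hm₁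
      _ = (K + ‖x‖ ^ 2 * Real.exp ‖x‖) / m ^ 2 := by ring
  · filter_upwards [eventually_ne_atTop 0] with m hm
    rw [exp_inv_natCast_smul_pow x hm]

end BanachAlgebra

/-- If `‖C m‖ ≤ K / m²` for all `m ≥ 1`, then
`(I + X/m + C m)^m → e^X` as `m → ∞`. -/
theorem tendsto_one_add_div_pow_exp (n : ℕ) (X : Matrix (Fin n) (Fin n) ℂ)
    (C : ℕ → Matrix (Fin n) (Fin n) ℂ) (K : ℝ)
    (hC : ∀ m : ℕ, 1 ≤ m → ‖C m‖ ≤ K / (m : ℝ) ^ 2) :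
    Filter.Tendsto (fun m : ℕ => (1 + (m : ℂ)⁻¹ • X + C m) ^ m)
      Filter.atTop (nhds (exp X)) := by
  -- `0 × 0` matrices form the zero ring, which is not a `NormOneClass`.
  rcases isEmpty_or_nonempty (Fin n) with hn | hn
  · exact tendsto_const_nhds.congr fun _ => Subsingleton.elim _ _
  · have hsmul (m : ℕ) : (m : ℂ)⁻¹ • X = (m : ℚ)⁻¹ • X := by
      rw [← Rat.cast_smul_eq_qsmul ℂ, Rat.cast_inv, Rat.cast_natCast]
    simp only [hsmul]
    exact tendsto_one_add_inv_smul_add_pow_exp X (eventually_atTop.2 ⟨1, hC⟩)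
end
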